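/- arXiv:1710.10150 — 2 statements merged into one kernel-verified Lean document; each statement's English description precedes it below -/
import Mathlib

section
/- Let (Ω, 𝔉, P) be a probability space, κ ≥ 1, let X_n : Ω → ℝ^κ be measurable for n ≥ 1, and let Δ_n : ℝ^κ → ℝ^κ be invertible linear maps. Suppose the family {Δ_n X_n : n ≥ 1} is uniformly tight, i.e. c(t) := sup_{n≥1} P(‖Δ_n X_n‖ > t) → 0 as t → ∞. Then C(s) := sup{ σ(Δ_n X_r) : n ≥ r ≥ 1 and ‖Δ_n ∘ Δ_r^{-1}‖ ≤ s } → 0 as s → 0+, where ‖·‖ denotes the operator norm on linear maps of ℝ^κ and σ(Z) := E[‖Z‖/(1 + ‖Z‖)]. -/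
open MeasureTheory Filter Topology
open scoped ENNReal

/-! Off the event `{t < ‖Δ_r X_r‖}` we have `‖Δ_n X_r‖ ≤ ‖Δ_n Δ_r⁻¹‖ t ≤ s t`, and the integrand
`x / (1 + x)` of `σ` is at most `1` everywhere, so `σ(Δ_n X_r) ≤ s t + c(t)`. Choosing first `t`
with `c(t)` small and then `s` small gives the claim. -/

section

variable {Ω : Type*} [MeasurableSpace Ω] {P : Measure Ω} [IsProbabilityMeasure P]

/-- `f ≤ c + 𝟙_{toMeasurable A}`, and the measurable hull of `A` has the measure of `A`. -/
theorem integral_le_add_measureReal_of_le_one_of_le_off {f : Ω → ℝ} {A : Set Ω} {c : ℝ}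
    (hc : 0 ≤ c) (hf : ∀ ω, f ω ≤ 1) (hfA : ∀ ω ∉ A, f ω ≤ c) :
    ∫ ω, f ω ∂P ≤ c + P.real A := by
  by_cases hint : Integrable f P
  swap
  · rw [integral_undef hint]; positivity
  have hM : MeasurableSet (toMeasurable P A) := measurableSet_toMeasurable P A
  have hle : ∀ ω, f ω ≤ c + (toMeasurable P A).indicator (fun _ => (1 : ℝ)) ω := by
    intro ω
    by_cases hω : ω ∈ toMeasurable P A
    · rw [Set.indicator_of_mem hω]; linarith [hf ω]
    · rw [Set.indicator_of_notMem hω, add_zero]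
      exact hfA ω fun h => hω (subset_toMeasurable P A h)
  calc ∫ ω, f ω ∂P ≤ ∫ ω, c + (toMeasurable P A).indicator (fun _ => (1 : ℝ)) ω ∂P :=
        integral_mono hint ((integrable_const c).add ((integrable_const 1).indicator hM)) hle
    _ = c + P.real A := by
        rw [integral_add (integrable_const c) ((integrable_const 1).indicator hM),
          integral_indicator_const _ hM, integral_const, measureReal_def (s := toMeasurable P A),
          measure_toMeasurable]
        simp [measureReal_def]

theorem integral_norm_div_one_add_norm_le {E F : Type*} [NormedAddCommGroup E]
    [NormedAddCommGroup F] {Y : Ω → E} {Z : Ω → F} {s t : ℝ} (hs : 0 ≤ s) (ht : 0 ≤ t)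
    (hYZ : ∀ ω, ‖Y ω‖ ≤ s * ‖Z ω‖) :
    ∫ ω, ‖Y ω‖ / (1 + ‖Y ω‖) ∂P ≤ s * t + P.real {ω | t < ‖Z ω‖} := by
  refine integral_le_add_measureReal_of_le_one_of_le_off (by positivity)
    (fun ω => (div_le_one (by positivity)).2 (by linarith)) fun ω hω => ?_
  calc ‖Y ω‖ / (1 + ‖Y ω‖) ≤ ‖Y ω‖ := div_le_self (norm_nonneg _) (by simp)
    _ ≤ s * ‖Z ω‖ := hYZ ω
    _ ≤ s * t := by gcongr; exact not_lt.1 hω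

end

theorem ContinuousLinearMap.norm_apply_le_norm_comp_symm_mul {𝕜 E F G : Type*}
    [NontriviallyNormedField 𝕜] [SeminormedAddCommGroup E] [SeminormedAddCommGroup F]
    [SeminormedAddCommGroup G] [NormedSpace 𝕜 E] [NormedSpace 𝕜 F] [NormedSpace 𝕜 G]
    (L : E →L[𝕜] F) (e : E ≃L[𝕜] G) (x : E) :
    ‖L x‖ ≤ ‖L.comp (e.symm : G →L[𝕜] E)‖ * ‖e x‖ := by
  simpa using (L.comp (e.symm : G →L[𝕜] E)).le_opNorm (e x)

theorem tendsto_nhdsGT_zero_of_le_mul_add {C : ℝ → ℝ} {g : ℝ → ℝ}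
    (hg : Tendsto g atTop (𝓝 0)) (hC0 : ∀ s > 0, 0 ≤ C s)
    (hC : ∀ s > 0, ∀ t ≥ 0, C s ≤ s * t + g t) :
    Tendsto C (𝓝[>] 0) (𝓝 0) := by
  rw [Metric.tendsto_nhds]
  intro ε hε
  obtain ⟨t, hgt, ht⟩ :=
    ((hg.eventually (gt_mem_nhds (half_pos hε))).and (eventually_ge_atTop 0)).exists
  have hδ : 0 < ε / (2 * (t + 1)) := by positivity
  filter_upwards [Ioc_mem_nhdsGT hδ] with s ⟨hs, hsδ⟩
  have hst : s * t < ε / 2 := calc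
    s * t ≤ ε / (2 * (t + 1)) * t := by gcongr
    _ < ε / (2 * (t + 1)) * (t + 1) := by gcongr; linarith
    _ = ε / 2 := by field_simp
  rw [Real.dist_eq, sub_zero, abs_of_nonneg (hC0 s hs)]
  linarith [hC s hs t ht]

theorem stmt3_general {Ω : Type*} [MeasurableSpace Ω] (P : Measure Ω) [IsProbabilityMeasure P]
    (κ : ℕ)
    (X : ℕ → Ω → EuclideanSpace ℝ (Fin κ))
    (Δ : ℕ → (EuclideanSpace ℝ (Fin κ) ≃L[ℝ] EuclideanSpace ℝ (Fin κ)))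
    (htight : Tendsto (fun t : ℝ => ⨆ (n : ℕ) (_ : 1 ≤ n), P {ω | t < ‖Δ n (X n ω)‖})
      atTop (𝓝 0)) :
    Tendsto (fun s : ℝ => sSup {v : ℝ | ∃ n r : ℕ, 1 ≤ r ∧ r ≤ n ∧
        ‖((Δ n : EuclideanSpace ℝ (Fin κ) →L[ℝ] EuclideanSpace ℝ (Fin κ)).comp
            ((Δ r).symm : EuclideanSpace ℝ (Fin κ) →L[ℝ] EuclideanSpace ℝ (Fin κ)))‖ ≤ s ∧
        v = ∫ ω, ‖Δ n (X r ω)‖ / (1 + ‖Δ n (X r ω)‖) ∂P})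
      (𝓝[>] 0) (𝓝 0) := by
  set c := fun t : ℝ => ⨆ (n : ℕ) (_ : 1 ≤ n), P {ω | t < ‖Δ n (X n ω)‖}
  have hc_ne_top : ∀ t, c t ≠ ∞ :=
    fun t => ne_top_of_le_ne_top ENNReal.one_ne_top (iSup₂_le fun _ _ => prob_le_one)
  refine tendsto_nhdsGT_zero_of_le_mul_add (g := fun t => (c t).toReal)
    (by simpa [Function.comp_def] using (ENNReal.tendsto_toReal ENNReal.zero_ne_top).comp htight)
    (fun s _ => Real.sSup_nonneg ?_) fun s hs t ht => Real.sSup_le ?_ (by positivity)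
  · rintro v ⟨n, r, -, -, -, rfl⟩
    exact integral_nonneg fun ω => by positivity
  · rintro v ⟨n, r, hr, -, hnr, rfl⟩
    calc _ ≤ s * t + P.real {ω | t < ‖Δ r (X r ω)‖} :=
          integral_norm_div_one_add_norm_le hs.le ht fun ω =>
            (ContinuousLinearMap.norm_apply_le_norm_comp_symm_mul
              (Δ n : EuclideanSpace ℝ (Fin κ) →L[ℝ] EuclideanSpace ℝ (Fin κ)) (Δ r) (X r ω)).trans
              (by gcongr)
      _ ≤ s * t + (c t).toReal := by
          gcongr
          exact ENNReal.toReal_mono (hc_ne_top t)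
            (le_iSup₂ (f := fun n (_ : 1 ≤ n) => P {ω | t < ‖Δ n (X n ω)‖}) r hr)

/-- claim (♠) of the Infinite Divisibility Lemma: uniform tightness of
`{Δ_n X_n}` implies `C(s) := sup{σ(Δ_n X_r) : n ≥ r ≥ 1, ‖Δ_n ∘ Δ_r⁻¹‖ ≤ s} → 0` as
`s → 0+`, where `σ(Z) = E[‖Z‖/(1+‖Z‖)]`. -/
theorem stmt3 {Ω : Type*} [MeasurableSpace Ω] (P : Measure Ω) [IsProbabilityMeasure P]
    (κ : ℕ) (hκ : 1 ≤ κ)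
    (X : ℕ → Ω → EuclideanSpace ℝ (Fin κ)) (hX : ∀ n, Measurable (X n))
    (Δ : ℕ → (EuclideanSpace ℝ (Fin κ) ≃L[ℝ] EuclideanSpace ℝ (Fin κ)))
    (htight : Tendsto (fun t : ℝ => ⨆ (n : ℕ) (_ : 1 ≤ n), P {ω | t < ‖Δ n (X n ω)‖})
      atTop (𝓝 0)) :
    Tendsto (fun s : ℝ => sSup {v : ℝ | ∃ n r : ℕ, 1 ≤ r ∧ r ≤ n ∧
        ‖((Δ n : EuclideanSpace ℝ (Fin κ) →L[ℝ] EuclideanSpace ℝ (Fin κ)).comp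
            ((Δ r).symm : EuclideanSpace ℝ (Fin κ) →L[ℝ] EuclideanSpace ℝ (Fin κ)))‖ ≤ s ∧
        v = ∫ ω, ‖Δ n (X r ω)‖ / (1 + ‖Δ n (X r ω)‖) ∂P})
      (𝓝[>] 0) (𝓝 0) :=
  stmt3_general P κ X Δ htight
end

section
/- Let X be a set, T : X → X, r : X → ℝ with r(x) ≥ c > 0 for all x, let Y := {(x,y) ∈ X × ℝ : 0 ≤ y < r(x)}, let Φ_t be the suspension semiflow Φ_t(x,y) := (T^n x, y + t − r_n(x)) with n := N(t)(x,y) := #{m ≥ 1 : r_m(x) ≤ y + t}, and let κ ≥ 1. Let f : Y → ℝ^κ be such that for each x ∈ X the map s ↦ f(x,s) is integrable on [0, r(x)). Define φ(x) := ∫_0^{r(x)} f(x,s) ds, ℰ(x,u) := ∫_0^u f(x,s) ds, the smooth cocycle F(t,(x,u)) := ∫_0^t f(Φ_s(x,u)) ds, and the jump cocycle J(t,(x,u)) := ∑_{k=0}^{N(t)(x,u)−1} φ(T^k x). Then for all t ≥ 0 and (x,u) ∈ Y: F(t,(x,u)) = J(t,(x,u)) − ℰ(x,u) + ℰ(Φ_t(x,u)).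 -/
open Filter Topology MeasureTheory

/-- Birkhoff sum `r_n(x) = ∑_{k=0}^{n-1} r(T^k x)` of the roof function. -/
def roofSum {X : Type*} (T : X → X) (r : X → ℝ) (n : ℕ) (x : X) : ℝ :=
  ∑ k ∈ Finset.range n, r (T^[k] x)

/-- The renewal cocycle `N(t)(x,y) = #{n ≥ 1 : r_n(x) ≤ y + t}`. -/
noncomputable def renewalN {X : Type*} (T : X → X) (r : X → ℝ) (t : ℝ) (p : X × ℝ) : ℕ :=
  Set.ncard {n : ℕ | 1 ≤ n ∧ roofSum T r n p.1 ≤ p.2 + t}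

/-- The suspension semiflow `Φ_t(x,y) = (T^n x, y + t − r_n(x))` with `n = N(t)(x,y)`. -/
noncomputable def susFlow {X : Type*} (T : X → X) (r : X → ℝ) (t : ℝ) (p : X × ℝ) :
    X × ℝ :=
  (T^[renewalN T r t p] p.1, p.2 + t - roofSum T r (renewalN T r t p) p.1)

/-!
Write `(x, u) = Φ_u(x, 0)`, so the flow integral is `∫_u^{u+t} g` with `g(w) = f(Φ_w(x, 0))`.
On `[r_k(x), r_{k+1}(x))` the orbit of `(x, 0)` climbs the fibre over `T^k x`, i.e.
`g(w) = f(T^k x, w - r_k(x))`. Hence `∫_0^{r_n(x)} g = ∑_{k<n} φ(T^k x)`, and the last partial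
fibre contributes `ℰ(Φ_w(x, 0))`. Subtracting the same decomposition at `w = u`, which is just
`ℰ(x, u)`, gives the identity.
-/

open Set

section Suspension

variable {X : Type*} {T : X → X} {r : X → ℝ}

@[simp]
lemma roofSum_zero (x : X) : roofSum T r 0 x = 0 := by
  simp [roofSum]

lemma roofSum_succ (n : ℕ) (x : X) :
    roofSum T r (n + 1) x = roofSum T r n x + r (T^[n] x) :=
  Finset.sum_range_succ _ _

lemma monotone_roofSum (hr : ∀ x, 0 ≤ r x) (x : X) : Monotone (roofSum T r · x) :=
  fun _ _ hmn => Finset.sum_le_sum_of_subset_of_nonneg (Finset.range_subset_range.2 hmn)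
    fun _ _ _ => hr _

lemma nsmul_le_roofSum {c : ℝ} (hr : ∀ x, c ≤ r x) (n : ℕ) (x : X) :
    n • c ≤ roofSum T r n x := by
  simpa [roofSum] using Finset.card_nsmul_le_sum (Finset.range n) (fun k => r (T^[k] x)) c
    fun _ _ => hr _

lemma exists_mem_Ico_roofSum {c : ℝ} (hc : 0 < c) (hr : ∀ x, c ≤ r x) (x : X) {v : ℝ}
    (hv : 0 ≤ v) : ∃ n, v ∈ Ico (roofSum T r n x) (roofSum T r (n + 1) x) := by
  have hunbdd : ¬BddAbove (range (roofSum T r · x)) := by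
    refine not_bddAbove_iff.2 fun B => ?_
    obtain ⟨n, hn⟩ := exists_lt_nsmul hc B
    exact ⟨_, mem_range_self n, hn.trans_le (nsmul_le_roofSum hr n x)⟩
  have hcover := iUnion_Ico_map_succ_eq_Ici
    (fun n => monotone_roofSum (fun x => hc.le.trans (hr x)) x (Nat.zero_le n)) hunbdd
  have hv' : v ∈ ⋃ n : ℕ, Ico (roofSum T r n x) (roofSum T r (Order.succ n) x) := by
    rw [hcover]
    simpa using hv
  simpa using hv'

lemma renewalN_eq_of_mem_Ico (hr : ∀ x, 0 ≤ r x) {n : ℕ} {t : ℝ} {p : X × ℝ}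
    (h : p.2 + t ∈ Ico (roofSum T r n p.1) (roofSum T r (n + 1) p.1)) :
    renewalN T r t p = n := by
  have hset : {m : ℕ | 1 ≤ m ∧ roofSum T r m p.1 ≤ p.2 + t} = Icc 1 n := by
    ext m
    refine and_congr_right fun _ => ⟨fun hm => ?_, fun hm => ?_⟩
    · by_contra! hnm
      exact (h.2.trans_le (monotone_roofSum hr p.1 hnm)).not_ge hm
    · exact (monotone_roofSum hr p.1 hm).trans h.1
  rw [renewalN, hset, ← Finset.coe_Icc, ncard_coe_finset, Nat.card_Icc, Nat.add_sub_cancel]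

lemma susFlow_eq_of_mem_Ico (hr : ∀ x, 0 ≤ r x) {n : ℕ} {t : ℝ} {p : X × ℝ}
    (h : p.2 + t ∈ Ico (roofSum T r n p.1) (roofSum T r (n + 1) p.1)) :
    susFlow T r t p = (T^[n] p.1, p.2 + t - roofSum T r n p.1) := by
  rw [susFlow, renewalN_eq_of_mem_Ico hr h]

lemma renewalN_eq_renewalN_zero (t : ℝ) (p : X × ℝ) :
    renewalN T r t p = renewalN T r (p.2 + t) (p.1, 0) := by
  simp [renewalN]

lemma susFlow_eq_susFlow_zero (t : ℝ) (p : X × ℝ) :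
    susFlow T r t p = susFlow T r (p.2 + t) (p.1, 0) := by
  simp [susFlow, ← renewalN_eq_renewalN_zero]

end Suspension

lemma IntervalIntegrable.of_eqOn_Ioo {E : Type*} [NormedAddCommGroup E] {g h : ℝ → E}
    {a b : ℝ} (hab : a ≤ b) (hgh : EqOn g h (Ioo a b)) (hh : IntervalIntegrable h volume a b) :
    IntervalIntegrable g volume a b := by
  rw [intervalIntegrable_iff_integrableOn_Ioo_of_le hab] at hh ⊢
  exact hh.congr_fun hgh.symm measurableSet_Ioo

section Integral

variable {X : Type*} {T : X → X} {r : X → ℝ} {E : Type*} [NormedAddCommGroup E]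
  {f : X × ℝ → E}

lemma intervalIntegrable_slice (hf : ∀ x, IntegrableOn (fun s => f (x, s)) (Ico 0 (r x)))
    (x : X) {b : ℝ} (hb : 0 ≤ b) (hbr : b ≤ r x) :
    IntervalIntegrable (fun s => f (x, s)) volume 0 b := by
  rw [intervalIntegrable_iff_integrableOn_Ioo_of_le hb]
  exact (hf x).mono_set (Ioo_subset_Ico_self.trans (Ico_subset_Ico_right hbr))

lemma eqOn_susFlow_zero (hr : ∀ x, 0 ≤ r x) (x : X) (n : ℕ) :
    EqOn (fun w => susFlow T r w (x, 0)) (fun w => (T^[n] x, w - roofSum T r n x))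
      (Ico (roofSum T r n x) (roofSum T r (n + 1) x)) := fun w hw => by
  simpa using susFlow_eq_of_mem_Ico (p := (x, 0)) hr (by simpa using hw)

lemma intervalIntegrable_susFlow_zero_of_mem_Icc (hr : ∀ x, 0 ≤ r x)
    (hf : ∀ x, IntegrableOn (fun s => f (x, s)) (Ico 0 (r x))) {x : X} {n : ℕ} {v : ℝ}
    (hv : v ∈ Icc (roofSum T r n x) (roofSum T r (n + 1) x)) :
    IntervalIntegrable (fun w => f (susFlow T r w (x, 0))) volume (roofSum T r n x) v := by
  have hslice := intervalIntegrable_slice hf (T^[n] x) (sub_nonneg.2 hv.1)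
    (by linarith [hv.2, roofSum_succ (T := T) (r := r) n x])
  refine .of_eqOn_Ioo hv.1 (fun w hw => congrArg f (eqOn_susFlow_zero hr x n
    ⟨hw.1.le, hw.2.trans_le hv.2⟩)) ?_
  simpa using hslice.comp_sub_right (roofSum T r n x)

lemma intervalIntegrable_susFlow_zero_roofSum (hr : ∀ x, 0 ≤ r x)
    (hf : ∀ x, IntegrableOn (fun s => f (x, s)) (Ico 0 (r x))) (x : X) (n : ℕ) :
    IntervalIntegrable (fun w => f (susFlow T r w (x, 0))) volume 0 (roofSum T r n x) := by
  simpa using IntervalIntegrable.trans_iterate (a := (roofSum T r · x)) fun k _ =>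
    intervalIntegrable_susFlow_zero_of_mem_Icc hr hf
      ⟨monotone_roofSum hr x k.le_succ, le_rfl⟩

lemma intervalIntegrable_susFlow_zero {c : ℝ} (hc : 0 < c) (hr : ∀ x, c ≤ r x)
    (hf : ∀ x, IntegrableOn (fun s => f (x, s)) (Ico 0 (r x))) (x : X) {v : ℝ} (hv : 0 ≤ v) :
    IntervalIntegrable (fun w => f (susFlow T r w (x, 0))) volume 0 v := by
  have hr₀ (x : X) : 0 ≤ r x := hc.le.trans (hr x)
  obtain ⟨n, hn⟩ := exists_mem_Ico_roofSum hc hr x hv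
  exact (intervalIntegrable_susFlow_zero_roofSum hr₀ hf x n).trans
    (intervalIntegrable_susFlow_zero_of_mem_Icc hr₀ hf (Ico_subset_Icc_self hn))

variable [NormedSpace ℝ E]

lemma integral_susFlow_zero_of_mem_Icc (hr : ∀ x, 0 ≤ r x) {x : X} {n : ℕ} {v : ℝ}
    (hv : v ∈ Icc (roofSum T r n x) (roofSum T r (n + 1) x)) :
    ∫ w in (roofSum T r n x)..v, f (susFlow T r w (x, 0)) =
      ∫ s in (0 : ℝ)..(v - roofSum T r n x), f (T^[n] x, s) := by
  rw [intervalIntegral.integral_congr_Ioo_of_le hv.1 (fun w hw => congrArg f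
    (eqOn_susFlow_zero hr x n ⟨hw.1.le, hw.2.trans_le hv.2⟩)),
    intervalIntegral.integral_comp_sub_right (fun s => f (T^[n] x, s)), sub_self]

lemma integral_susFlow_zero_roofSum (hr : ∀ x, 0 ≤ r x)
    (hf : ∀ x, IntegrableOn (fun s => f (x, s)) (Ico 0 (r x))) (x : X) (n : ℕ) :
    ∫ w in (0 : ℝ)..(roofSum T r n x), f (susFlow T r w (x, 0)) =
      ∑ k ∈ Finset.range n, ∫ s in (0 : ℝ)..(r (T^[k] x)), f (T^[k] x, s) := by
  have hmem (k : ℕ) : roofSum T r (k + 1) x ∈ Icc (roofSum T r k x) (roofSum T r (k + 1) x) :=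
    ⟨monotone_roofSum hr x k.le_succ, le_rfl⟩
  have hsum := intervalIntegral.sum_integral_adjacent_intervals (a := (roofSum T r · x))
    (n := n) fun k _ => intervalIntegrable_susFlow_zero_of_mem_Icc hr hf (hmem k)
  rw [roofSum_zero] at hsum
  rw [← hsum]
  refine Finset.sum_congr rfl fun k _ => ?_
  rw [integral_susFlow_zero_of_mem_Icc hr (hmem k), roofSum_succ, add_sub_cancel_left]

lemma integral_susFlow_zero {c : ℝ} (hc : 0 < c) (hr : ∀ x, c ≤ r x)
    (hf : ∀ x, IntegrableOn (fun s => f (x, s)) (Ico 0 (r x))) (x : X) {v : ℝ} (hv : 0 ≤ v) :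
    ∫ w in (0 : ℝ)..v, f (susFlow T r w (x, 0)) =
      (∑ k ∈ Finset.range (renewalN T r v (x, 0)),
          ∫ s in (0 : ℝ)..(r (T^[k] x)), f (T^[k] x, s))
        + ∫ s in (0 : ℝ)..(susFlow T r v (x, 0)).2, f ((susFlow T r v (x, 0)).1, s) := by
  have hr₀ (x : X) : 0 ≤ r x := hc.le.trans (hr x)
  obtain ⟨n, hn⟩ := exists_mem_Ico_roofSum hc hr x hv
  have hn' : (x, (0 : ℝ)).2 + v ∈ Ico (roofSum T r n x) (roofSum T r (n + 1) x) := by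
    simpa using hn
  rw [renewalN_eq_of_mem_Ico hr₀ hn', susFlow_eq_of_mem_Ico hr₀ hn', zero_add,
    ← intervalIntegral.integral_add_adjacent_intervals
      (intervalIntegrable_susFlow_zero_roofSum hr₀ hf x n)
      (intervalIntegrable_susFlow_zero_of_mem_Icc hr₀ hf (Ico_subset_Icc_self hn)),
    integral_susFlow_zero_roofSum hr₀ hf,
    integral_susFlow_zero_of_mem_Icc hr₀ (Ico_subset_Icc_self hn)]

end Integral

theorem stmt15_general {X : Type*} (T : X → X) (r : X → ℝ) (c : ℝ) (hc : 0 < c)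
    (hr : ∀ x, c ≤ r x) (κ : ℕ)
    (f : X × ℝ → Fin κ → ℝ)
    (hf : ∀ x : X, IntegrableOn (fun s => f (x, s)) (Set.Ico 0 (r x))) :
    ∀ t : ℝ, 0 ≤ t → ∀ p : X × ℝ, 0 ≤ p.2 → p.2 < r p.1 →
      (∫ s in (0 : ℝ)..t, f (susFlow T r s p)) =
        (∑ k ∈ Finset.range (renewalN T r t p),
            ∫ s in (0 : ℝ)..(r (T^[k] p.1)), f (T^[k] p.1, s))
          - (∫ s in (0 : ℝ)..p.2, f (p.1, s))
          + ∫ s in (0 : ℝ)..(susFlow T r t p).2, f ((susFlow T r t p).1, s) := by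
  intro t ht p hp₀ hpr
  have hr₀ (x : X) : 0 ≤ r x := hc.le.trans (hr x)
  have hbase : (p.1, (0 : ℝ)).2 + p.2 ∈ Ico (roofSum T r 0 p.1) (roofSum T r (0 + 1) p.1) := by
    simpa [roofSum] using ⟨hp₀, hpr⟩
  have hN₀ : renewalN T r p.2 (p.1, 0) = 0 := renewalN_eq_of_mem_Ico hr₀ hbase
  have hΦ₀ : susFlow T r p.2 (p.1, 0) = p := by
    simpa using susFlow_eq_of_mem_Ico (p := (p.1, 0)) hr₀ hbase
  have hshift : (fun s => f (susFlow T r s p)) = fun s => f (susFlow T r (p.2 + s) (p.1, 0)) :=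
    funext fun s => by rw [susFlow_eq_susFlow_zero]
  calc (∫ s in (0 : ℝ)..t, f (susFlow T r s p))
      = ∫ w in p.2..(p.2 + t), f (susFlow T r w (p.1, 0)) := by
        rw [hshift, intervalIntegral.integral_comp_add_left (fun w => f (susFlow T r w (p.1, 0))),
          add_zero]
    _ = (∫ w in (0 : ℝ)..(p.2 + t), f (susFlow T r w (p.1, 0)))
          - ∫ w in (0 : ℝ)..p.2, f (susFlow T r w (p.1, 0)) :=
        (intervalIntegral.integral_interval_sub_left
          (intervalIntegrable_susFlow_zero hc hr hf p.1 (by linarith))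
          (intervalIntegrable_susFlow_zero hc hr hf p.1 hp₀)).symm
    _ = _ := by
      rw [integral_susFlow_zero hc hr hf p.1 (by linarith), integral_susFlow_zero hc hr hf p.1 hp₀,
        hN₀, hΦ₀, ← renewalN_eq_renewalN_zero t p, ← susFlow_eq_susFlow_zero t p,
        Finset.range_zero, Finset.sum_empty, zero_add]
      abel

/-- the smooth cocycle `F(t,(x,u)) = ∫_0^t f(Φ_s(x,u)) ds` is
cohomologous to the jump cocycle `J(t,(x,u)) = ∑_{k<N(t)(x,u)} φ(T^k x)`,
`φ(x) = ∫_0^{r(x)} f(x,s) ds`, via the transfer function `ℰ(x,u) = ∫_0^u f(x,s) ds`: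
`F(t,p) = J(t,p) − ℰ(p) + ℰ(Φ_t p)` on `Y = {(x,u) : 0 ≤ u < r(x)}`. -/
theorem stmt15 {X : Type*} (T : X → X) (r : X → ℝ) (c : ℝ) (hc : 0 < c)
    (hr : ∀ x, c ≤ r x) (κ : ℕ) (hκ : 1 ≤ κ)
    (f : X × ℝ → Fin κ → ℝ)
    (hf : ∀ x : X, IntegrableOn (fun s => f (x, s)) (Set.Ico 0 (r x))) :
    ∀ t : ℝ, 0 ≤ t → ∀ p : X × ℝ, 0 ≤ p.2 → p.2 < r p.1 →
      (∫ s in (0 : ℝ)..t, f (susFlow T r s p)) =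
        (∑ k ∈ Finset.range (renewalN T r t p),
            ∫ s in (0 : ℝ)..(r (T^[k] p.1)), f (T^[k] p.1, s))
          - (∫ s in (0 : ℝ)..p.2, f (p.1, s))
          + ∫ s in (0 : ℝ)..(susFlow T r t p).2, f ((susFlow T r t p).1, s) :=
  stmt15_general T r c hc hr κ f hf
end
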